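/- arXiv:math/9811054 — 4 statements merged into one kernel-verified Lean document; each statement's English description precedes it below -/
import Mathlib

section
/- Twisting preserves the Leibniz rule: let Ω be an H-bicovariant bimodule and d : H → Ω a k-linear map satisfying the Leibniz rule d(hg) = (dh)·g + h·(dg) and which is a bicomodule map, i.e. β_L∘d = (id⊗d)∘Δ and β_R∘d = (d⊗id)∘Δ. Let χ : H⊗H → k be a unital 2-cocycle, let h • g = χ(h₁⊗g₁)·h₂g₂·χ⁻¹(h₃⊗g₃) be the twisted product on H, and let the twisted module structures on Ω be h • v = χ(h₁⊗v₍1₎)·h₂·v₍2̲₎·χ⁻¹(h₃⊗v₍3₎) and v • h = χ(v₍1₎⊗h₁)·v₍2̲₎·h₂·χ⁻¹(v₍3₎⊗h₃), where (id⊗β_R)∘β_L(v) = v₍1₎⊗v₍2̲₎⊗v₍3₎. Then d(h • g) = (dh) • g + h • (dg) for all h, g ∈ H. -/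
open scoped TensorProduct
open TensorProduct LinearMap

namespace PaperTwist

variable (k H : Type) [Field k] [Ring H] [HopfAlgebra k H]

/-- The comultiplication of `H`. -/
noncomputable def Δ : H →ₗ[k] H ⊗[k] H := Coalgebra.comul

/-- The twofold iterated comultiplication `h ↦ h₁ ⊗ (h₂ ⊗ h₃)`. -/
noncomputable def Δ₂ : H →ₗ[k] H ⊗[k] (H ⊗[k] H) := (LinearMap.lTensor H (Δ k H)) ∘ₗ (Δ k H)

/-- The counit of `H`. -/
noncomputable def ε : H →ₗ[k] k := Coalgebra.counit

/-- The antipode of `H`. -/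
noncomputable def S : H →ₗ[k] H := HopfAlgebra.antipode k

/-- `χ : H ⊗ H → k` is a unital 2-cocycle with convolution inverse `χ'`:
`χ(h₁⊗g₁)χ⁻¹(h₂⊗g₂) = ε(h)ε(g) = χ⁻¹(h₁⊗g₁)χ(h₂⊗g₂)`,
`χ(g₁⊗f₁)χ(h⊗g₂f₂) = χ(h₁⊗g₁)χ(h₂g₂⊗f)` and `χ(1⊗h) = ε(h) = χ(h⊗1)`,
all Sweedler sums being expressed via arbitrary finite representations of coproducts. -/
def IsFunCocycle (χ χ' : H ⊗[k] H →ₗ[k] k) : Prop :=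
  (∀ (h g : H) (ι κ : Type) (s : Finset ι) (t : Finset κ) (h1 h2 : ι → H) (g1 g2 : κ → H),
    Δ k H h = ∑ i ∈ s, h1 i ⊗ₜ[k] h2 i → Δ k H g = ∑ j ∈ t, g1 j ⊗ₜ[k] g2 j →
    ((∑ i ∈ s, ∑ j ∈ t, χ (h1 i ⊗ₜ[k] g1 j) * χ' (h2 i ⊗ₜ[k] g2 j) = ε k H h * ε k H g) ∧
     (∑ i ∈ s, ∑ j ∈ t, χ' (h1 i ⊗ₜ[k] g1 j) * χ (h2 i ⊗ₜ[k] g2 j) = ε k H h * ε k H g))) ∧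
  (∀ (h g f : H) (ι κ μ : Type) (s : Finset ι) (t : Finset κ) (u : Finset μ)
      (h1 h2 : ι → H) (g1 g2 : κ → H) (f1 f2 : μ → H),
    Δ k H h = ∑ i ∈ s, h1 i ⊗ₜ[k] h2 i → Δ k H g = ∑ j ∈ t, g1 j ⊗ₜ[k] g2 j →
    Δ k H f = ∑ l ∈ u, f1 l ⊗ₜ[k] f2 l →
    ∑ j ∈ t, ∑ l ∈ u, χ (g1 j ⊗ₜ[k] f1 l) * χ (h ⊗ₜ[k] (g2 j * f2 l))
      = ∑ i ∈ s, ∑ j ∈ t, χ (h1 i ⊗ₜ[k] g1 j) * χ ((h2 i * g2 j) ⊗ₜ[k] f)) ∧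
  (∀ h : H, χ ((1 : H) ⊗ₜ[k] h) = ε k H h ∧ χ (h ⊗ₜ[k] (1 : H)) = ε k H h)

/-- `m` is the twisted product `h • g = χ(h₁⊗g₁)·h₂g₂·χ⁻¹(h₃⊗g₃)` on `H`, expressed via
arbitrary finite representations of the iterated coproducts. -/
def IsTwistedProduct (χ χ' : H ⊗[k] H →ₗ[k] k) (m : H →ₗ[k] H →ₗ[k] H) : Prop :=
  ∀ (h g : H) (ι κ : Type) (s : Finset ι) (t : Finset κ)
    (h1 h2 h3 : ι → H) (g1 g2 g3 : κ → H),
    Δ₂ k H h = ∑ i ∈ s, h1 i ⊗ₜ[k] (h2 i ⊗ₜ[k] h3 i) →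
    Δ₂ k H g = ∑ j ∈ t, g1 j ⊗ₜ[k] (g2 j ⊗ₜ[k] g3 j) →
    m h g = ∑ i ∈ s, ∑ j ∈ t, (χ (h1 i ⊗ₜ[k] g1 j) * χ' (h3 i ⊗ₜ[k] g3 j)) • (h2 i * g2 j)

variable (Ω : Type) [AddCommGroup Ω] [Module k Ω]

/-- An `H`-bicovariant bimodule: an `H`-bimodule `Ω` (with left action `aL` and right action
`aR`) together with commuting counital coassociative left and right coactions `βL, βR`
that are bimodule maps. -/
structure IsBicovariantBimodule (aL aR : H →ₗ[k] Ω →ₗ[k] Ω)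
    (βL : Ω →ₗ[k] H ⊗[k] Ω) (βR : Ω →ₗ[k] Ω ⊗[k] H) : Prop where
  actL_one : ∀ v : Ω, aL 1 v = v
  actL_mul : ∀ (g h : H) (v : Ω), aL (g * h) v = aL g (aL h v)
  actR_one : ∀ v : Ω, aR 1 v = v
  actR_mul : ∀ (g h : H) (v : Ω), aR (g * h) v = aR h (aR g v)
  act_comm : ∀ (g h : H) (v : Ω), aL g (aR h v) = aR h (aL g v)
  βL_counit : ∀ v : Ω, (TensorProduct.lid k Ω) ((LinearMap.rTensor Ω (ε k H)) (βL v)) = v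
  βL_coassoc : ∀ v : Ω,
    (LinearMap.rTensor Ω (Δ k H)) (βL v)
      = (TensorProduct.assoc k H H Ω).symm ((LinearMap.lTensor H βL) (βL v))
  βR_counit : ∀ v : Ω, (TensorProduct.rid k Ω) ((LinearMap.lTensor Ω (ε k H)) (βR v)) = v
  βR_coassoc : ∀ v : Ω,
    (LinearMap.lTensor Ω (Δ k H)) (βR v)
      = (TensorProduct.assoc k Ω H H) ((LinearMap.rTensor H βR) (βR v))
  coact_comm : ∀ v : Ω,
    (LinearMap.lTensor H βR) (βL v)
      = (TensorProduct.assoc k H Ω H) ((LinearMap.rTensor H βL) (βR v))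
  βL_bimod : ∀ (h g : H) (v : Ω) (ι κ : Type) (s : Finset ι) (t : Finset κ)
      (h1 h2 : ι → H) (g1 g2 : κ → H),
    Δ k H h = ∑ i ∈ s, h1 i ⊗ₜ[k] h2 i → Δ k H g = ∑ j ∈ t, g1 j ⊗ₜ[k] g2 j →
    βL (aR g (aL h v))
      = ∑ i ∈ s, ∑ j ∈ t,
          (TensorProduct.map ((LinearMap.mulLeft k (h1 i)) ∘ₗ (LinearMap.mulRight k (g1 j)))
            ((aR (g2 j)) ∘ₗ (aL (h2 i)))) (βL v)
  βR_bimod : ∀ (h g : H) (v : Ω) (ι κ : Type) (s : Finset ι) (t : Finset κ)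
      (h1 h2 : ι → H) (g1 g2 : κ → H),
    Δ k H h = ∑ i ∈ s, h1 i ⊗ₜ[k] h2 i → Δ k H g = ∑ j ∈ t, g1 j ⊗ₜ[k] g2 j →
    βR (aR g (aL h v))
      = ∑ i ∈ s, ∑ j ∈ t,
          (TensorProduct.map ((aR (g1 j)) ∘ₗ (aL (h1 i)))
            ((LinearMap.mulLeft k (h2 i)) ∘ₗ (LinearMap.mulRight k (g2 j)))) (βR v)

/-- `bL` is the twisted left action `h • v = χ(h₁⊗v₍1₎)·h₂·v₍2̲₎·χ⁻¹(h₃⊗v₍3₎)` on a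
bicovariant bimodule, expressed via arbitrary finite representations of `Δ₂ h` and of the
two-sided coaction `(id ⊗ β_R)(β_L v) = v₍1₎ ⊗ v₍2̲₎ ⊗ v₍3₎`. -/
def IsTwistedActL (χ χ' : H ⊗[k] H →ₗ[k] k) (aL : H →ₗ[k] Ω →ₗ[k] Ω)
    (βL : Ω →ₗ[k] H ⊗[k] Ω) (βR : Ω →ₗ[k] Ω ⊗[k] H)
    (bL : H →ₗ[k] Ω →ₗ[k] Ω) : Prop :=
  ∀ (h : H) (v : Ω) (ι κ : Type) (s : Finset ι) (t : Finset κ)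
    (h1 h2 h3 : ι → H) (a : κ → H) (w : κ → Ω) (b : κ → H),
    Δ₂ k H h = ∑ i ∈ s, h1 i ⊗ₜ[k] (h2 i ⊗ₜ[k] h3 i) →
    (LinearMap.lTensor H βR) (βL v) = ∑ m ∈ t, a m ⊗ₜ[k] (w m ⊗ₜ[k] b m) →
    bL h v = ∑ i ∈ s, ∑ m ∈ t,
      (χ (h1 i ⊗ₜ[k] a m) * χ' (h3 i ⊗ₜ[k] b m)) • aL (h2 i) (w m)

/-- `bR` is the twisted right action `v • h = χ(v₍1₎⊗h₁)·v₍2̲₎·h₂·χ⁻¹(v₍3₎⊗h₃)`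
(`bR h v = v • h`). -/
def IsTwistedActR (χ χ' : H ⊗[k] H →ₗ[k] k) (aR : H →ₗ[k] Ω →ₗ[k] Ω)
    (βL : Ω →ₗ[k] H ⊗[k] Ω) (βR : Ω →ₗ[k] Ω ⊗[k] H)
    (bR : H →ₗ[k] Ω →ₗ[k] Ω) : Prop :=
  ∀ (h : H) (v : Ω) (ι κ : Type) (s : Finset ι) (t : Finset κ)
    (h1 h2 h3 : ι → H) (a : κ → H) (w : κ → Ω) (b : κ → H),
    Δ₂ k H h = ∑ i ∈ s, h1 i ⊗ₜ[k] (h2 i ⊗ₜ[k] h3 i) →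
    (LinearMap.lTensor H βR) (βL v) = ∑ m ∈ t, a m ⊗ₜ[k] (w m ⊗ₜ[k] b m) →
    bR h v = ∑ i ∈ s, ∑ m ∈ t,
      (χ (a m ⊗ₜ[k] h1 i) * χ' (b m ⊗ₜ[k] h3 i)) • aR (h2 i) (w m)

end PaperTwist

open PaperTwist

/-!
Because `d` is a bicomodule map, the two-sided coaction of `d h` is `h₁ ⊗ d h₂ ⊗ h₃`. Hence
`d (h • g)`, `(d h) • g` and `h • (d g)` are Sweedler sums over `Δ₂ h ⊗ Δ₂ g` with the same
coefficients `χ(h₁⊗g₁) χ⁻¹(h₃⊗g₃)`, applied to `d (h₂ g₂)`, `(d h₂) g₂` and `h₂ (d g₂)`; the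
untwisted Leibniz rule matches them termwise.
-/

theorem TensorProduct.exists_sum_tmul_tmul {k A B C : Type} [CommRing k]
    [AddCommGroup A] [Module k A] [AddCommGroup B] [Module k B] [AddCommGroup C] [Module k C]
    (x : A ⊗[k] (B ⊗[k] C)) :
    ∃ (ι : Type) (s : Finset ι) (a : ι → A) (b : ι → B) (c : ι → C),
      x = ∑ i ∈ s, a i ⊗ₜ[k] (b i ⊗ₜ[k] c i) := by
  obtain ⟨S, hS⟩ := TensorProduct.exists_finset (R := k) x
  choose T hT using fun p : A × (B ⊗[k] C) => TensorProduct.exists_finset (R := k) p.2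
  refine ⟨(_ : A × (B ⊗[k] C)) × (B × C), S.sigma T,
    fun q => q.1.1, fun q => q.2.1, fun q => q.2.2, ?_⟩
  rw [Finset.sum_sigma, hS]
  exact Finset.sum_congr rfl fun p _ => by rw [hT p, TensorProduct.tmul_sum]

namespace PaperTwist

variable {k H Ω : Type} [Field k] [Ring H] [HopfAlgebra k H] [AddCommGroup Ω] [Module k Ω]
  {βL : Ω →ₗ[k] H ⊗[k] Ω} {βR : Ω →ₗ[k] Ω ⊗[k] H} {d : H →ₗ[k] Ω}

theorem lTensor_coact_coact_eq_of_comodule_map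
    (hdβL : ∀ h : H, βL (d h) = (LinearMap.lTensor H d) (Δ k H h))
    (hdβR : ∀ h : H, βR (d h) = (LinearMap.rTensor H d) (Δ k H h)) (x : H) :
    (LinearMap.lTensor H βR) (βL (d x))
      = (LinearMap.lTensor H (LinearMap.rTensor H d)) (Δ₂ k H x) := by
  have hβR : βR ∘ₗ d = (LinearMap.rTensor H d) ∘ₗ Δ k H := LinearMap.ext hdβR
  rw [hdβL, ← LinearMap.lTensor_comp_apply, hβR, LinearMap.lTensor_comp]
  rfl

theorem lTensor_coact_coact_eq_sum_of_comodule_map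
    (hdβL : ∀ h : H, βL (d h) = (LinearMap.lTensor H d) (Δ k H h))
    (hdβR : ∀ h : H, βR (d h) = (LinearMap.rTensor H d) (Δ k H h))
    {x : H} {ι : Type} {s : Finset ι} {x1 x2 x3 : ι → H}
    (hx : Δ₂ k H x = ∑ i ∈ s, x1 i ⊗ₜ[k] (x2 i ⊗ₜ[k] x3 i)) :
    (LinearMap.lTensor H βR) (βL (d x)) = ∑ i ∈ s, x1 i ⊗ₜ[k] (d (x2 i) ⊗ₜ[k] x3 i) := by
  simp [lTensor_coact_coact_eq_of_comodule_map hdβL hdβR, hx]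

end PaperTwist

theorem statement_12_general
    {k H Ω : Type} [Field k] [Ring H] [HopfAlgebra k H] [AddCommGroup Ω] [Module k Ω]
    (aL aR : H →ₗ[k] Ω →ₗ[k] Ω) (βL : Ω →ₗ[k] H ⊗[k] Ω) (βR : Ω →ₗ[k] Ω ⊗[k] H)
    (d : H →ₗ[k] Ω)
    (hLeib : ∀ h g : H, d (h * g) = aR g (d h) + aL h (d g))
    (hdβL : ∀ h : H, βL (d h) = (LinearMap.lTensor H d) (Δ k H h))
    (hdβR : ∀ h : H, βR (d h) = (LinearMap.rTensor H d) (Δ k H h))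
    (χ χ' : H ⊗[k] H →ₗ[k] k)
    (m : H →ₗ[k] H →ₗ[k] H) (hm : IsTwistedProduct k H χ χ' m)
    (bL bR : H →ₗ[k] Ω →ₗ[k] Ω)
    (hbL : IsTwistedActL k H Ω χ χ' aL βL βR bL)
    (hbR : IsTwistedActR k H Ω χ χ' aR βL βR bR) :
    ∀ h g : H, d (m h g) = bR g (d h) + bL h (d g) := by
  intro h g
  obtain ⟨ι, s, h1, h2, h3, hh⟩ := TensorProduct.exists_sum_tmul_tmul (Δ₂ k H h)
  obtain ⟨κ, t, g1, g2, g3, hg⟩ := TensorProduct.exists_sum_tmul_tmul (Δ₂ k H g)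
  rw [hm h g ι κ s t h1 h2 h3 g1 g2 g3 hh hg,
    hbR g (d h) κ ι t s g1 g2 g3 h1 (fun i => d (h2 i)) h3 hg
      (lTensor_coact_coact_eq_sum_of_comodule_map hdβL hdβR hh),
    hbL h (d g) ι κ s t h1 h2 h3 g1 (fun j => d (g2 j)) g3 hh
      (lTensor_coact_coact_eq_sum_of_comodule_map hdβL hdβR hg),
    Finset.sum_comm (s := t), ← Finset.sum_add_distrib, map_sum]
  refine Finset.sum_congr rfl fun i _ => ?_
  rw [map_sum, ← Finset.sum_add_distrib]
  exact Finset.sum_congr rfl fun j _ => by rw [map_smul, hLeib, smul_add]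

/-- Twisting preserves the Leibniz rule: if `d : H → Ω` satisfies the
Leibniz rule for a bicovariant bimodule `Ω` and is a bicomodule map, then for a unital
2-cocycle `χ : H ⊗ H → k` (with convolution inverse `χ'`), the twisted product `m` and
the twisted actions `bL, bR` satisfy `d(h • g) = (dh) • g + h • (dg)`. -/
theorem statement_12
    {k H Ω : Type} [Field k] [Ring H] [HopfAlgebra k H] [AddCommGroup Ω] [Module k Ω]
    (hS : Function.Bijective (S k H))
    (aL aR : H →ₗ[k] Ω →ₗ[k] Ω) (βL : Ω →ₗ[k] H ⊗[k] Ω) (βR : Ω →ₗ[k] Ω ⊗[k] H)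
    (hB : IsBicovariantBimodule k H Ω aL aR βL βR)
    (d : H →ₗ[k] Ω)
    (hLeib : ∀ h g : H, d (h * g) = aR g (d h) + aL h (d g))
    (hdβL : ∀ h : H, βL (d h) = (LinearMap.lTensor H d) (Δ k H h))
    (hdβR : ∀ h : H, βR (d h) = (LinearMap.rTensor H d) (Δ k H h))
    (χ χ' : H ⊗[k] H →ₗ[k] k) (hχ : IsFunCocycle k H χ χ')
    (m : H →ₗ[k] H →ₗ[k] H) (hm : IsTwistedProduct k H χ χ' m)
    (bL bR : H →ₗ[k] Ω →ₗ[k] Ω)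
    (hbL : IsTwistedActL k H Ω χ χ' aL βL βR bL)
    (hbR : IsTwistedActR k H Ω χ χ' aR βL βR bR) :
    ∀ h g : H, d (m h g) = bR g (d h) + bL h (d g) :=
  statement_12_general aL aR βL βR d hLeib hdβL hdβR χ χ' m hm bL bR hbL hbR
end

section
/- Let H be a Hopf algebra over a field k and χ ∈ H⊗H a counital 2-cocycle. Then the following identity holds in H⊗H: χ⁽¹⁾·S((χ⁽²⁾)₁) ⊗ (χ⁽²⁾)₂ = χ⁽¹⁾·S(χ⁽²⁾)·S(χ⁻⁽¹⁾) ⊗ χ⁻⁽²⁾, where on the left the coproduct is applied to the second leg of χ, and on the right the two factors χ and χ⁻¹ carry independent implicit summations. -/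
open scoped TensorProduct
open TensorProduct LinearMap

namespace PaperTwist

variable (k H : Type) [Field k] [Ring H] [HopfAlgebra k H]

/-- `χ`, with (two-sided) inverse `χ'` in the algebra `H ⊗ H`, is a counital 2-cocycle:
`χ₂₃ · ((id ⊗ Δ) χ) = χ₁₂ · ((Δ ⊗ id) χ)` and `(ε ⊗ id) χ = 1 = (id ⊗ ε) χ`. -/
def IsCocycle (χ χ' : H ⊗[k] H) : Prop :=
  χ * χ' = 1 ∧ χ' * χ = 1 ∧
    (1 ⊗ₜ[k] χ) * (LinearMap.lTensor H (Δ k H) χ) =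
      (TensorProduct.assoc k H H H) ((χ ⊗ₜ[k] 1) * (LinearMap.rTensor H (Δ k H) χ)) ∧
    (TensorProduct.lid k H) ((LinearMap.rTensor H (ε k H)) χ) = 1 ∧
    (TensorProduct.rid k H) ((LinearMap.lTensor H (ε k H)) χ) = 1

variable (V : Type) [AddCommGroup V] [Module k V]

/-- A (left-left) crossed module (Drinfeld–Radford–Yetter module) over `H`:
a left action `ρ` and a counital coassociative left coaction `β` satisfying
`h₁·v₍₁₎ ⊗ h₂ ▷ v₍∞₎ = (h₁ ▷ v)₍₁₎·h₂ ⊗ (h₁ ▷ v)₍∞₎`, the latter expressed via arbitrary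
finite representations of `Δ h`. -/
structure IsCrossedModule (ρ : H →ₗ[k] V →ₗ[k] V) (β : V →ₗ[k] H ⊗[k] V) : Prop where
  act_one : ∀ v : V, ρ 1 v = v
  act_mul : ∀ (g h : H) (v : V), ρ (g * h) v = ρ g (ρ h v)
  coact_counit : ∀ v : V, (TensorProduct.lid k V) ((LinearMap.rTensor V (ε k H)) (β v)) = v
  coact_coassoc : ∀ v : V,
    (LinearMap.rTensor V (Δ k H)) (β v)
      = (TensorProduct.assoc k H H V).symm ((LinearMap.lTensor H β) (β v))
  compat : ∀ (h : H) (v : V) (ι : Type) (s : Finset ι) (h1 h2 : ι → H),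
    Δ k H h = ∑ i ∈ s, h1 i ⊗ₜ[k] h2 i →
    ∑ i ∈ s, (TensorProduct.map (LinearMap.mulLeft k (h1 i)) (ρ (h2 i))) (β v)
      = ∑ i ∈ s, (LinearMap.rTensor V (LinearMap.mulRight k (h2 i))) (β (ρ (h1 i) v))

/-- The twisted coaction `β_χ(v) = χ⁽¹⁾·(χ⁻⁽¹⁾ ▷ v)₍₁₎·χ⁻⁽²⁾ ⊗ χ⁽²⁾ ▷ (χ⁻⁽¹⁾ ▷ v)₍∞₎`,
expressed through finite representations `χ = ∑ x1 i ⊗ x2 i`, `χ⁻¹ = ∑ y1 j ⊗ y2 j`. -/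
noncomputable def twistedCoaction (ρ : H →ₗ[k] V →ₗ[k] V) (β : V →ₗ[k] H ⊗[k] V)
    {ι₁ ι₂ : Type} (s₁ : Finset ι₁) (x1 x2 : ι₁ → H) (s₂ : Finset ι₂) (y1 y2 : ι₂ → H) :
    V →ₗ[k] H ⊗[k] V :=
  ∑ i ∈ s₁, ∑ j ∈ s₂,
    (TensorProduct.map ((LinearMap.mulLeft k (x1 i)) ∘ₗ (LinearMap.mulRight k (y2 j)))
        (ρ (x2 i))) ∘ₗ β ∘ₗ (ρ (y1 j))

/-- The twisted coproduct `Δ_χ(h) = χ · Δ(h) · χ⁻¹`. -/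
noncomputable def twistedComul (χ χ' : H ⊗[k] H) : H →ₗ[k] H ⊗[k] H :=
  (LinearMap.mulLeft k χ) ∘ₗ (LinearMap.mulRight k χ') ∘ₗ (Δ k H)

end PaperTwist

open PaperTwist

/-! Writing the cocycle identity as `(id ⊗ Δ) χ = (1 ⊗ χ⁻¹) · χ₁₂ · (Δ ⊗ id) χ` and applying
`x ⊗ y ⊗ z ↦ x S(y) ⊗ z`, the factor `(Δ ⊗ id) χ` collapses: `x₁ S(x₂) = ε(x)`, so only
`(ε ⊗ id) χ = 1` survives from it, while `1 ⊗ χ⁻¹` comes out as `S(χ⁻⁽¹⁾) ⊗ χ⁻⁽²⁾` because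
`S` is an antihomomorphism. -/

open Coalgebra

lemma TensorProduct.assoc_symm_mul {R A B C : Type*} [CommSemiring R] [Semiring A] [Semiring B]
    [Semiring C] [Algebra R A] [Algebra R B] [Algebra R C] (X Y : A ⊗[R] (B ⊗[R] C)) :
    (TensorProduct.assoc R A B C).symm (X * Y)
      = (TensorProduct.assoc R A B C).symm X * (TensorProduct.assoc R A B C).symm Y :=
  map_mul (Algebra.TensorProduct.assoc R R R A B C).symm X Y

namespace HopfAlgebra

variable {R A : Type*} [CommSemiring R] [Semiring A] [HopfAlgebra R A]

variable (R A) in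
noncomputable def mulAntipode : A ⊗[R] A →ₗ[R] A :=
  mul' R A ∘ₗ lTensor A (antipode R)

@[simp]
lemma mulAntipode_tmul (a b : A) : mulAntipode R A (a ⊗ₜ b) = a * antipode R b := rfl

lemma mulAntipode_tmul_mul (u v : A) (t : A ⊗[R] A) :
    mulAntipode R A ((u ⊗ₜ v) * t) = u * mulAntipode R A t * antipode R v := by
  induction t with
  | zero => simp
  | tmul p q =>
    simp [Algebra.TensorProduct.tmul_mul_tmul, antipode_mul_antidistrib, mul_assoc]
  | add s t hs ht => simp only [mul_add, map_add, hs, ht, add_mul]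

lemma mulAntipode_comul (x : A) :
    mulAntipode R A (comul x) = algebraMap R A (counit x) :=
  mul_antipode_lTensor_comul_apply x

lemma mulAntipode_mul_comul (t : A ⊗[R] A) (x : A) :
    mulAntipode R A (t * comul x) = counit (R := R) x • mulAntipode R A t := by
  induction t with
  | zero => simp
  | tmul u v =>
    rw [mulAntipode_tmul_mul, mulAntipode_comul, mulAntipode_tmul, ← Algebra.commutes,
      Algebra.smul_def, mul_assoc]
  | add s t hs ht => simp only [add_mul, map_add, hs, ht, smul_add]

lemma rTensor_mulAntipode_assoc_symm_one_tmul_mul (w t c : A ⊗[R] A) :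
    rTensor A (mulAntipode R A)
        ((TensorProduct.assoc R A A A).symm (1 ⊗ₜ w) * ((t ⊗ₜ 1) * rTensor A comul c))
      = rTensor A (mulLeft R (mulAntipode R A t) ∘ₗ antipode R) w
          * (1 ⊗ₜ TensorProduct.lid R A (rTensor A counit c)) := by
  induction w with
  | zero => simp
  | add w w' hw hw' => simp only [tmul_add, map_add, add_mul, hw, hw']
  | tmul a b =>
    induction c with
    | zero => simp
    | add c c' hc hc' => simp only [map_add, tmul_add, mul_add, hc, hc']
    | tmul x y =>
      have hcollapse : mulAntipode R A ((1 ⊗ₜ a) * t * comul x)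
          = counit (R := R) x • (mulAntipode R A t * antipode R a) := by
        rw [mulAntipode_mul_comul, mulAntipode_tmul_mul, one_mul]
      simp [Algebra.TensorProduct.tmul_mul_tmul, ← mul_assoc, hcollapse, smul_tmul]

end HopfAlgebra

open HopfAlgebra

theorem statement_13_general
    {k H : Type} [Field k] [Ring H] [HopfAlgebra k H]
    (χ χ' : H ⊗[k] H) (hχ : IsCocycle k H χ χ') :
    (LinearMap.rTensor H ((LinearMap.mul' k H) ∘ₗ (LinearMap.lTensor H (S k H))))
        ((TensorProduct.assoc k H H H).symm ((LinearMap.lTensor H (Δ k H)) χ))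
      = (LinearMap.rTensor H
          ((LinearMap.mulLeft k ((LinearMap.mul' k H) ((LinearMap.lTensor H (S k H)) χ)))
            ∘ₗ (S k H))) χ' := by
  obtain ⟨-, hχ'χ, hcocycle, hcounit, -⟩ := hχ
  have hcomul : lTensor H comul χ
      = (1 ⊗ₜ χ') * TensorProduct.assoc k H H H ((χ ⊗ₜ 1) * rTensor H comul χ) := by
    rw [← Δ, ← hcocycle, ← mul_assoc, Algebra.TensorProduct.tmul_mul_tmul, one_mul, hχ'χ,
      ← Algebra.TensorProduct.one_def, one_mul]
  change rTensor H (mulAntipode k H) _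
    = rTensor H (mulLeft k (mulAntipode k H χ) ∘ₗ antipode k) χ'
  rw [Δ, hcomul, TensorProduct.assoc_symm_mul, LinearEquiv.symm_apply_apply,
    rTensor_mulAntipode_assoc_symm_one_tmul_mul, ← ε, hcounit,
    ← Algebra.TensorProduct.one_def, mul_one]

/-- For a counital 2-cocycle `χ ∈ H ⊗ H` (with inverse `χ'`),
`χ⁽¹⁾·S((χ⁽²⁾)₁) ⊗ (χ⁽²⁾)₂ = χ⁽¹⁾·S(χ⁽²⁾)·S(χ⁻⁽¹⁾) ⊗ χ⁻⁽²⁾` in `H ⊗ H`.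
The left-hand side applies `id ⊗ Δ` to `χ` and then multiplies `x·S y ⊗ z`; the right-hand
side multiplies `U = χ⁽¹⁾·S(χ⁽²⁾)` by `S` of the first leg of `χ⁻¹`. -/
theorem statement_13
    {k H : Type} [Field k] [Ring H] [HopfAlgebra k H]
    (hS : Function.Bijective (S k H))
    (χ χ' : H ⊗[k] H) (hχ : IsCocycle k H χ χ') :
    (LinearMap.rTensor H ((LinearMap.mul' k H) ∘ₗ (LinearMap.lTensor H (S k H))))
        ((TensorProduct.assoc k H H H).symm ((LinearMap.lTensor H (Δ k H)) χ))
      = (LinearMap.rTensor H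
          ((LinearMap.mulLeft k ((LinearMap.mul' k H) ((LinearMap.lTensor H (S k H)) χ)))
            ∘ₗ (S k H))) χ' :=
  statement_13_general χ χ' hχ
end

section
/- Let H be a Hopf algebra over a field k and χ ∈ H⊗H a counital 2-cocycle. Then the following identity holds in H⊗H: χ⁽¹⁾ ⊗ S(χ′⁻⁽¹⁾·χ⁽²⁾)·χ′⁻⁽²⁾ = (χ⁻⁽¹⁾)₁ ⊗ S((χ⁻⁽¹⁾)₂)·χ⁻⁽²⁾, where χ′⁻⁽¹⁾⊗χ′⁻⁽²⁾ denotes a second, independently summed copy of χ⁻¹, and on the right the coproduct is applied to the first leg of χ⁻¹. -/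
open scoped TensorProduct
open TensorProduct LinearMap

open PaperTwist


/-! Write `T(a ⊗ b) = S(a)·b`, so that the left-hand side is `(id ⊗ T)(χ⁻¹₂₃ · χ₁₂)`.
Solving the cocycle identity for `χ⁻¹₂₃ · χ₁₂` gives `((id ⊗ Δ)χ) · ((Δ ⊗ id)χ⁻¹)`, and since
`T(Δ(g)·x) = ε(g)·T(x)`, applying `id ⊗ T` collapses the factor `(id ⊗ Δ)χ` to `(id ⊗ ε)χ = 1`. -/

open Coalgebra HopfAlgebra

theorem mul_eq_mul_of_mul_eq_mul_of_inv {M : Type*} [Monoid M] {a a' b c d d' : M}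
    (ha : a' * a = 1) (hd : d * d' = 1) (h : a * b = c * d) : a' * c = b * d' :=
  calc a' * c = a' * (c * d) * d' := by rw [mul_assoc, mul_assoc, hd, mul_one]
    _ = a' * (a * b) * d' := by rw [h]
    _ = b * d' := by rw [← mul_assoc a', ha, one_mul]

section

variable {R A B C : Type*} [CommSemiring R] [Semiring A] [Semiring B] [Semiring C]
  [Algebra R A] [Algebra R B] [Algebra R C]

lemma lTensor_mulLeft_comp_flip_mk_one (y : B ⊗[R] C) (x : A ⊗[R] B) :
    lTensor A (mulLeft R y ∘ₗ (TensorProduct.mk R B C).flip 1) x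
      = (1 ⊗ₜ y) * TensorProduct.assoc R A B C (x ⊗ₜ 1) := by
  induction x using TensorProduct.induction_on with
  | zero => simp
  | tmul a b => simp
  | add u v hu hv => simp only [map_add, add_tmul, mul_add, hu, hv]

end

namespace HopfAlgebra

variable {R H : Type*} [CommSemiring R] [Semiring H] [HopfAlgebra R H]

lemma assoc_rTensor_comul_mul_eq_one {x y : H ⊗[R] H} (h : x * y = 1) :
    TensorProduct.assoc R H H H (rTensor H comul x) *
      TensorProduct.assoc R H H H (rTensor H comul y) = 1 := by
  have := congrArg ((Algebra.TensorProduct.assoc R R R H H H).toAlgHom.comp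
    (Algebra.TensorProduct.map (Bialgebra.comulAlgHom R H) (AlgHom.id R H))) h
  rwa [map_mul, map_one] at this

variable (R H) in
noncomputable def antipodeMul : H ⊗[R] H →ₗ[R] H := mul' R H ∘ₗ rTensor H (antipode R)

@[simp] lemma antipodeMul_tmul (a b : H) : antipodeMul R H (a ⊗ₜ b) = antipode R a * b := rfl

lemma antipodeMul_comul (g : H) :
    antipodeMul R H (comul (R := R) g) = algebraMap R H (counit g) :=
  mul_antipode_rTensor_comul_apply g

lemma antipodeMul_mul_tmul (y : H ⊗[R] H) (a b : H) :
    antipodeMul R H (y * a ⊗ₜ b) = antipode R a * antipodeMul R H y * b := by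
  induction y using TensorProduct.induction_on with
  | zero => simp
  | tmul u v => simp [antipode_mul_antidistrib, mul_assoc]
  | add u v hu hv => simp [add_mul, mul_add, hu, hv]

lemma antipodeMul_comul_mul (g : H) (x : H ⊗[R] H) :
    antipodeMul R H (comul (R := R) g * x) = counit (R := R) g • antipodeMul R H x := by
  induction x using TensorProduct.induction_on with
  | zero => simp
  | tmul a b =>
    rw [antipodeMul_mul_tmul, antipodeMul_comul, antipodeMul_tmul, Algebra.algebraMap_eq_smul_one,
      mul_smul_comm, smul_mul_assoc, mul_one]
  | add u v hu hv => simp [mul_add, hu, hv]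

lemma lTensor_antipodeMul_lTensor_comul_mul (w : H ⊗[R] H) (ξ : H ⊗[R] (H ⊗[R] H)) :
    lTensor H (antipodeMul R H) (lTensor H comul w * ξ)
      = (TensorProduct.rid R H (lTensor H counit w) ⊗ₜ 1) * lTensor H (antipodeMul R H) ξ := by
  induction w using TensorProduct.induction_on with
  | zero => simp
  | add u v hu hv => simp only [map_add, add_mul, hu, hv, add_tmul]
  | tmul h g =>
    induction ξ using TensorProduct.induction_on with
    | zero => simp
    | add u v hu hv => simp only [mul_add, map_add, hu, hv]
    | tmul c x => simp [antipodeMul_comul_mul, smul_tmul']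

end HopfAlgebra

theorem statement_14_general
    {k H : Type} [Field k] [Ring H] [HopfAlgebra k H]
    (χ χ' : H ⊗[k] H) (hχ : IsCocycle k H χ χ') :
    (LinearMap.lTensor H
        ((LinearMap.mul' k H) ∘ₗ (LinearMap.rTensor H (S k H)) ∘ₗ
          (LinearMap.mulLeft k χ') ∘ₗ ((TensorProduct.mk k H H).flip 1))) χ
      = (LinearMap.lTensor H ((LinearMap.mul' k H) ∘ₗ (LinearMap.rTensor H (S k H))))
          ((TensorProduct.assoc k H H H) ((LinearMap.rTensor H (Δ k H)) χ')) := by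
  obtain ⟨hmul, hmul', hcocycle, -, hcounit⟩ := hχ
  change TensorProduct.rid k H (lTensor H counit χ) = 1 at hcounit
  have hinv : (1 ⊗ₜ[k] χ') * (1 ⊗ₜ[k] χ : H ⊗[k] (H ⊗[k] H)) = 1 := by
    rw [Algebra.TensorProduct.tmul_mul_tmul, one_mul, hmul']
    exact Algebra.TensorProduct.one_def.symm
  have hcocycle' : (1 ⊗ₜ χ') * TensorProduct.assoc k H H H (χ ⊗ₜ 1)
      = lTensor H comul χ * TensorProduct.assoc k H H H (rTensor H comul χ') :=
    mul_eq_mul_of_mul_eq_mul_of_inv hinv (assoc_rTensor_comul_mul_eq_one hmul)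
      (hcocycle.trans (map_mul (Algebra.TensorProduct.assoc k k k H H H) _ _))
  calc _ = lTensor H (antipodeMul k H) ((1 ⊗ₜ χ') * TensorProduct.assoc k H H H (χ ⊗ₜ 1)) := by
        rw [← lTensor_mulLeft_comp_flip_mk_one, ← LinearMap.comp_apply, ← lTensor_comp]
        rfl
    _ = lTensor H (antipodeMul k H)
          (lTensor H comul χ * TensorProduct.assoc k H H H (rTensor H comul χ')) := by
        rw [hcocycle']
    _ = _ := by
        rw [lTensor_antipodeMul_lTensor_comul_mul, hcounit, ← Algebra.TensorProduct.one_def,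
          one_mul]
        rfl

/-- For a counital 2-cocycle `χ ∈ H ⊗ H` (with inverse `χ⁻¹`),
`χ⁽¹⁾ ⊗ S(χ′⁻⁽¹⁾·χ⁽²⁾)·χ′⁻⁽²⁾ = (χ⁻⁽¹⁾)₁ ⊗ S((χ⁻⁽¹⁾)₂)·χ⁻⁽²⁾` in `H ⊗ H`.
On the left, the map `z ↦ S(χ⁻⁽¹⁾·z)·χ⁻⁽²⁾` (implemented as
`z ↦ (mul) ∘ (S ⊗ id) (χ⁻¹ · (z ⊗ 1))`) is applied to the second leg of `χ`; on the right,
`Δ ⊗ id` is applied to `χ⁻¹` and then `S a · b` multiplies the last two legs. -/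
theorem statement_14
    {k H : Type} [Field k] [Ring H] [HopfAlgebra k H]
    (hS : Function.Bijective (S k H))
    (χ χ' : H ⊗[k] H) (hχ : IsCocycle k H χ χ') :
    (LinearMap.lTensor H
        ((LinearMap.mul' k H) ∘ₗ (LinearMap.rTensor H (S k H)) ∘ₗ
          (LinearMap.mulLeft k χ') ∘ₗ ((TensorProduct.mk k H H).flip 1))) χ
      = (LinearMap.lTensor H ((LinearMap.mul' k H) ∘ₗ (LinearMap.rTensor H (S k H))))
          ((TensorProduct.assoc k H H H) ((LinearMap.rTensor H (Δ k H)) χ')) :=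
  statement_14_general χ χ' hχ
end

section
/- For a ∈ ℂ define X_a : ℕ×ℕ×ℤ → ℂ by X_a(n, m, s) = aⁿ·∏_{k=0}^{n-1}(−s−k) if m = 0, and X_a(n, m, s) = 0 if m ≥ 1 (integers cast into ℂ; empty products equal 1). Then for all n, m, l ∈ ℕ and all s, t ∈ ℤ: ∑_{j=0}^{m} ∑_{k=0}^{l} C(m,j)·C(l,k)·X_a(j, k, t)·X_a(n, m−j+l−k, (j+s)+(k+t)) = ∑_{j=0}^{n} ∑_{k=0}^{m} C(n,j)·C(m,k)·X_a(j, k, s)·X_a(n−j+m−k, l, t). (This is the 2-cocycle condition for the cotwisting cocycle χ of the Planck scale Hopf algebra, evaluated on the basis elements pⁿgʳ, pᵐgˢ, pˡgᵗ of C(B₊), whose values are χ(pⁿgʳ ⊗ pᵐgˢ) = X_{iA}(n, m, s) and whose coproduct is Δ(pᵐgˢ) = ∑_{j=0}^{m} C(m,j)·pʲgˢ ⊗ p^{m−j}g^{j+s}.) -/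
/-- The function `X_a(n, m, s) = aⁿ·∏_{k=0}^{n-1}(−s−k)` if `m = 0`, and `0` if `m ≥ 1`:
the value `χ(pⁿgʳ ⊗ pᵐgˢ)` (with `a = iA`) of the cotwisting cocycle of the Planck scale
Hopf algebra on the basis of `C(B₊)`. -/
noncomputable def Xval (a : ℂ) (n m : ℕ) (s : ℤ) : ℂ :=
  if m = 0 then a ^ n * ∏ k ∈ Finset.range n, (-(s : ℂ) - (k : ℂ)) else 0

lemma Xval_zero (a : ℂ) (n : ℕ) (s : ℤ) :
    Xval a n 0 s = a ^ n * ∏ k ∈ Finset.range n, (-(s : ℂ) - (k : ℂ)) := if_pos rfl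

lemma Xval_ne (a : ℂ) (n m : ℕ) (s : ℤ) (h : m ≠ 0) : Xval a n m s = 0 := if_neg h

lemma vand (x y : ℂ) (n : ℕ) :
    ∏ i ∈ Finset.range n, (x + y - i) =
    ∑ j ∈ Finset.range (n+1), (n.choose j : ℂ) *
      (∏ i ∈ Finset.range j, (x - i)) * ∏ i ∈ Finset.range (n-j), (y - i) := by
  induction n with
  | zero => simp
  | succ n ih =>
    rw [Finset.prod_range_succ, ih, Finset.sum_mul]
    have key : ∀ j ∈ Finset.range (n+1),
        (n.choose j : ℂ) * (∏ i ∈ Finset.range j, (x - i)) *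
            (∏ i ∈ Finset.range (n-j), (y - i)) * (x + y - n)
        = (n.choose j : ℂ) * (∏ i ∈ Finset.range (j+1), (x - i)) *
            (∏ i ∈ Finset.range (n-j), (y - i))
          + (n.choose j : ℂ) * (∏ i ∈ Finset.range j, (x - i)) *
            (∏ i ∈ Finset.range (n-j+1), (y - i)) := by
      intro j hj
      rw [Finset.mem_range, Nat.lt_succ_iff] at hj
      have hx : x + y - (n : ℂ) = (x - j) + (y - ((n - j : ℕ) : ℂ)) := by
        rw [Nat.cast_sub hj]; ring
      rw [hx, mul_add, Finset.prod_range_succ, Finset.prod_range_succ]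
      ring
    rw [Finset.sum_congr rfl key, Finset.sum_add_distrib]
    -- target : A + B = T
    have hB' : ∑ j ∈ Finset.range (n+1), (n.choose (j+1) : ℂ) *
          (∏ i ∈ Finset.range (j+1), (x - i)) * (∏ i ∈ Finset.range (n-j), (y - i))
        = ∑ j ∈ Finset.range n, (n.choose (j+1) : ℂ) *
          (∏ i ∈ Finset.range (j+1), (x - i)) * (∏ i ∈ Finset.range (n-j), (y - i)) := by
      rw [Finset.sum_range_succ, Nat.choose_succ_self]
      simp
    have hB : ∑ j ∈ Finset.range (n+1), (n.choose j : ℂ) *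
          (∏ i ∈ Finset.range j, (x - i)) * (∏ i ∈ Finset.range (n-j+1), (y - i))
        = (∑ j ∈ Finset.range n, (n.choose (j+1) : ℂ) *
            (∏ i ∈ Finset.range (j+1), (x - i)) * (∏ i ∈ Finset.range (n-(j+1)+1), (y - i)))
          + (∏ i ∈ Finset.range (n+1), (y - i)) := by
      rw [Finset.sum_range_succ']
      simp
    rw [hB]
    have hT : ∑ j ∈ Finset.range (n+2), ((n+1).choose j : ℂ) *
          (∏ i ∈ Finset.range j, (x - i)) * (∏ i ∈ Finset.range (n+1-j), (y - i))
        = (∑ j ∈ Finset.range (n+1), ((n+1).choose (j+1) : ℂ) *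
            (∏ i ∈ Finset.range (j+1), (x - i)) * (∏ i ∈ Finset.range (n-j), (y - i)))
          + (∏ i ∈ Finset.range (n+1), (y - i)) := by
      rw [Finset.sum_range_succ']
      simp [Nat.succ_sub_succ]
    rw [hT]
    have pascal : ∀ j ∈ Finset.range (n+1),
        ((n+1).choose (j+1) : ℂ) * (∏ i ∈ Finset.range (j+1), (x - i)) *
            (∏ i ∈ Finset.range (n-j), (y - i))
        = (n.choose j : ℂ) * (∏ i ∈ Finset.range (j+1), (x - i)) *
            (∏ i ∈ Finset.range (n-j), (y - i))
          + (n.choose (j+1) : ℂ) * (∏ i ∈ Finset.range (j+1), (x - i)) *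
            (∏ i ∈ Finset.range (n-j), (y - i)) := by
      intro j _
      rw [Nat.choose_succ_succ]
      push_cast
      ring
    rw [Finset.sum_congr rfl pascal, Finset.sum_add_distrib]
    have : ∀ j ∈ Finset.range n, (n.choose (j+1) : ℂ) *
          (∏ i ∈ Finset.range (j+1), (x - i)) * (∏ i ∈ Finset.range (n-(j+1)+1), (y - i))
        = (n.choose (j+1) : ℂ) *
          (∏ i ∈ Finset.range (j+1), (x - i)) * (∏ i ∈ Finset.range (n-j), (y - i)) := by
      intro j hj
      rw [Finset.mem_range] at hj
      have h2 : n - (j+1) + 1 = n - j := by omega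
      rw [h2]
    rw [Finset.sum_congr rfl this, ← hB']
    ring

/-- The 2-cocycle condition for the cotwisting cocycle of the Planck
scale Hopf algebra, evaluated on basis elements `pⁿgʳ, pᵐgˢ, pˡgᵗ` of `C(B₊)`:
for all `n, m, l ∈ ℕ` and `s, t ∈ ℤ`,
`∑_{j≤m} ∑_{k≤l} C(m,j)·C(l,k)·X_a(j,k,t)·X_a(n, m−j+l−k, (j+s)+(k+t))
  = ∑_{j≤n} ∑_{k≤m} C(n,j)·C(m,k)·X_a(j,k,s)·X_a(n−j+m−k, l, t)`. -/
theorem statement_18 (a : ℂ) (n m l : ℕ) (s t : ℤ) :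
    ∑ j ∈ Finset.range (m + 1), ∑ k ∈ Finset.range (l + 1),
        (Nat.choose m j : ℂ) * (Nat.choose l k : ℂ) *
          Xval a j k t * Xval a n (m - j + (l - k)) (((j : ℤ) + s) + ((k : ℤ) + t))
      = ∑ j ∈ Finset.range (n + 1), ∑ k ∈ Finset.range (m + 1),
          (Nat.choose n j : ℂ) * (Nat.choose m k : ℂ) *
            Xval a j k s * Xval a (n - j + (m - k)) l t := by
  rcases Nat.eq_zero_or_pos l with hl | hl
  · subst hl
    -- LHS: inner sum over range 1
    have lhs_eq : ∑ j ∈ Finset.range (m + 1), ∑ k ∈ Finset.range (0 + 1),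
        (Nat.choose m j : ℂ) * (Nat.choose 0 k : ℂ) *
          Xval a j k t * Xval a n (m - j + (0 - k)) (((j : ℤ) + s) + ((k : ℤ) + t))
        = a ^ m * (∏ i ∈ Finset.range m, (-(t : ℂ) - i)) *
          (a ^ n * ∏ i ∈ Finset.range n, (-(((m : ℤ) + s + t : ℤ) : ℂ) - i)) := by
      rw [Finset.sum_congr rfl (fun j _ => Finset.sum_range_one
        (f := fun k => (Nat.choose m j : ℂ) * (Nat.choose 0 k : ℂ) *
          Xval a j k t * Xval a n (m - j + (0 - k)) (((j : ℤ) + s) + ((k : ℤ) + t))))]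
      rw [Finset.sum_eq_single m]
      · have h0 : m - m + (0 - 0) = 0 := by omega
        rw [h0, Xval_zero, Xval_zero,
          show (((m : ℕ) : ℤ) + s + (((0 : ℕ) : ℤ) + t)) = ((m : ℤ) + s + t) by push_cast; ring]
        simp only [Nat.choose_self, Nat.choose_zero_right, Nat.cast_one]
        ring
      · intro j hj hjm
        rw [Finset.mem_range, Nat.lt_succ_iff] at hj
        have h1 : m - j + (0 - 0) ≠ 0 := by omega
        rw [Xval_ne a n _ _ h1, mul_zero]
      · intro h
        exact absurd (Finset.self_mem_range_succ m) h
    rw [lhs_eq]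
    -- RHS: inner sum picks k = 0
    have rhs_eq : ∀ j ∈ Finset.range (n + 1),
        ∑ k ∈ Finset.range (m + 1), (Nat.choose n j : ℂ) * (Nat.choose m k : ℂ) *
            Xval a j k s * Xval a (n - j + (m - k)) 0 t
        = (Nat.choose n j : ℂ) * (a ^ j * ∏ i ∈ Finset.range j, (-(s : ℂ) - i)) *
            (a ^ (n - j + m) * ∏ i ∈ Finset.range (n - j + m), (-(t : ℂ) - i)) := by
      intro j hj
      rw [Finset.sum_eq_single 0]
      · rw [Xval_zero, Xval_zero]
        simp only [Nat.choose_zero_right, Nat.cast_one, Nat.sub_zero]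
        ring
      · intro k hk hk0
        rw [Xval_ne a j k s hk0, mul_zero, zero_mul]
      · intro h
        simp at h
    rw [Finset.sum_congr rfl rhs_eq]
    -- now the Vandermonde computation
    have term_eq : ∀ j ∈ Finset.range (n + 1),
        (Nat.choose n j : ℂ) * (a ^ j * ∏ i ∈ Finset.range j, (-(s : ℂ) - i)) *
            (a ^ (n - j + m) * ∏ i ∈ Finset.range (n - j + m), (-(t : ℂ) - i))
        = a ^ (n + m) * (∏ i ∈ Finset.range m, (-(t : ℂ) - i)) *
            ((Nat.choose n j : ℂ) * (∏ i ∈ Finset.range j, (-(s : ℂ) - i)) *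
              ∏ i ∈ Finset.range (n - j), ((-(t : ℂ) - m) - i)) := by
      intro j hj
      rw [Finset.mem_range, Nat.lt_succ_iff] at hj
      have hpow : a ^ j * a ^ (n - j + m) = a ^ (n + m) := by
        rw [← pow_add]
        congr 1
        omega
      have hsplit : (∏ i ∈ Finset.range (n - j + m), (-(t : ℂ) - i))
          = (∏ i ∈ Finset.range m, (-(t : ℂ) - i)) *
            ∏ i ∈ Finset.range (n - j), ((-(t : ℂ) - m) - i) := by
        have h1 : n - j + m = m + (n - j) := by omega
        rw [h1, Finset.prod_range_add]
        congr 1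
        refine Finset.prod_congr rfl fun i _ => ?_
        push_cast
        ring
      rw [hsplit, ← hpow]
      ring
    rw [Finset.sum_congr rfl term_eq, ← Finset.mul_sum]
    have hv := vand (-(s : ℂ)) (-(t : ℂ) - m) n
    have hx : ∀ i ∈ Finset.range n, (-(s : ℂ) + (-(t : ℂ) - m) - i)
        = (-(((m : ℤ) + s + t : ℤ) : ℂ) - i) := by
      intro i _
      push_cast
      ring
    rw [← Finset.prod_congr rfl hx, hv]
    ring
  · -- l > 0 : both sides vanish
    have hL : ∀ j ∈ Finset.range (m + 1), ∀ k ∈ Finset.range (l + 1),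
        (Nat.choose m j : ℂ) * (Nat.choose l k : ℂ) *
          Xval a j k t * Xval a n (m - j + (l - k)) (((j : ℤ) + s) + ((k : ℤ) + t)) = 0 := by
      intro j hj k hk
      rcases Nat.eq_zero_or_pos k with hk0 | hk0
      · subst hk0
        have h1 : m - j + (l - 0) ≠ 0 := by omega
        rw [Xval_ne a n _ _ h1, mul_zero]
      · have h1 : k ≠ 0 := by omega
        rw [Xval_ne a j k t h1, mul_zero, zero_mul]
    have hR : ∀ j ∈ Finset.range (n + 1), ∀ k ∈ Finset.range (m + 1),
        (Nat.choose n j : ℂ) * (Nat.choose m k : ℂ) *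
            Xval a j k s * Xval a (n - j + (m - k)) l t = 0 := by
      intro j _ k _
      have h1 : l ≠ 0 := by omega
      rw [Xval_ne a _ l t h1, mul_zero]
    rw [Finset.sum_eq_zero fun j hj => Finset.sum_eq_zero (hL j hj),
      Finset.sum_eq_zero fun j hj => Finset.sum_eq_zero (hR j hj)]
end
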